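/- If in a dagger kernel category every pullback functor f⁻¹ : KSub(Y) → KSub(X) has a right adjoint ∀_f, then every KSub(X) is a Boolean algebra. -/

import Mathlib

open CategoryTheory Limits

universe v u

class Dagger (C : Type u) [Category.{v} C] [HasZeroMorphisms C] where
  dag : ∀ {X Y : C}, (X ⟶ Y) → (Y ⟶ X)
  dag_dag : ∀ {X Y : C} (f : X ⟶ Y), dag (dag f) = f
  dag_comp : ∀ {X Y Z : C} (f : X ⟶ Y) (g : Y ⟶ Z), dag (f ≫ g) = dag g ≫ dag f
  dag_id : ∀ (X : C), dag (𝟙 X) = 𝟙 X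
  dag_zero : ∀ (X Y : C), dag (0 : X ⟶ Y) = 0

namespace Dagger

variable {C : Type u} [Category.{v} C] [HasZeroMorphisms C] [Dagger C]

/-- `f` is a dagger mono: `f† ∘ f = id`. -/
def DaggerMono {X Y : C} (f : X ⟶ Y) : Prop := f ≫ dag f = 𝟙 X

/-- `f` is a dagger epi: `f ∘ f† = id`. -/
def DaggerEpi {X Y : C} (f : X ⟶ Y) : Prop := dag f ≫ f = 𝟙 Y

/-- `k` is a kernel of `f`. -/
structure IsKer {K X Y : C} (f : X ⟶ Y) (k : K ⟶ X) : Prop where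
  comp_zero : k ≫ f = 0
  lift : ∀ {Z : C} (g : Z ⟶ X), g ≫ f = 0 → ∃! h : Z ⟶ K, h ≫ k = g

/-- `k` is a kernel of `f` which is moreover a dagger mono. -/
def IsDagKer {K X Y : C} (f : X ⟶ Y) (k : K ⟶ X) : Prop :=
  IsKer f k ∧ DaggerMono k

/-- `k` is a (dagger-monic) kernel of some map. -/
def KernelMap {K X : C} (k : K ⟶ X) : Prop :=
  ∃ (Y : C) (f : X ⟶ Y), IsDagKer f k

/-- order of subobjects, by factorisation -/
def SubLE {M N X : C} (m : M ⟶ X) (n : N ⟶ X) : Prop :=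
  ∃ φ : M ⟶ N, φ ≫ n = m

/-- equality of subobjects -/
def SubEq {M N X : C} (m : M ⟶ X) (n : N ⟶ X) : Prop :=
  SubLE m n ∧ SubLE n m

/-- `p` represents the orthocomplement `m^⊥ = ker(m†)` of `m`. -/
def IsOrthoOf {M P X : C} (m : M ⟶ X) (p : P ⟶ X) : Prop :=
  IsDagKer (dag m) p

/-- `w` is the meet (intersection) of the kernels `m` and `n` in `KSub(X)`. -/
def IsMeet {M N W X : C} (m : M ⟶ X) (n : N ⟶ X) (w : W ⟶ X) : Prop :=
  KernelMap w ∧ SubLE w m ∧ SubLE w n ∧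
    ∀ {K : C} (k : K ⟶ X), KernelMap k → SubLE k m → SubLE k n → SubLE k w

/-- `j` is the join `m ∨ n = (m^⊥ ∧ n^⊥)^⊥` in `KSub(X)`. -/
def IsJoin {M N J X : C} (m : M ⟶ X) (n : N ⟶ X) (j : J ⟶ X) : Prop :=
  ∃ (MP NP W : C) (mp : MP ⟶ X) (np : NP ⟶ X) (w : W ⟶ X),
    IsOrthoOf m mp ∧ IsOrthoOf n np ∧ IsMeet mp np w ∧ IsOrthoOf w j

/-- `p` represents the pullback `f⁻¹(n) = ker(coker(n) ∘ f)` of the kernel `n` along `f`. -/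
def IsInvImg {N P X Y : C} (f : X ⟶ Y) (n : N ⟶ Y) (p : P ⟶ X) : Prop :=
  ∃ (NP : C) (np : NP ⟶ Y), IsOrthoOf n np ∧ IsDagKer (f ≫ dag np) p

/-- `i` represents the image `ker(coker(f)) = ker(ker(f†)†)` of `f`. -/
def IsImg {I X Y : C} (f : X ⟶ Y) (i : I ⟶ Y) : Prop :=
  ∃ (K : C) (k : K ⟶ Y), IsDagKer (dag f) k ∧ IsDagKer (dag k) i

/-- zero-mono: `m ∘ f = 0` implies `f = 0`. -/
def ZeroMono {X Y : C} (m : X ⟶ Y) : Prop :=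
  ∀ {Z : C} (f : Z ⟶ X), f ≫ m = 0 → f = 0

/-- zero-epi: `f ∘ e = 0` implies `f = 0`. -/
def ZeroEpi {X Y : C} (e : X ⟶ Y) : Prop :=
  ∀ {Z : C} (f : Y ⟶ Z), e ≫ f = 0 → f = 0

end Dagger

/-- A dagger kernel category: a dagger category with a zero object in which
every morphism has a kernel that is a dagger mono. -/
class DagKerCat (C : Type u) [Category.{v} C] [HasZeroMorphisms C]
    [HasZeroObject C] extends Dagger C where
  hasKer : ∀ {X Y : C} (f : X ⟶ Y), ∃ (K : C) (k : K ⟶ X), Dagger.IsDagKer f k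

/-!
Meeting with a kernel `m` has a right adjoint on `KSub(X)`, the implication `d ↦ ∀_m(m⁻¹(d))`:
a kernel `x` satisfies `m ∧ x ≤ d` iff `m⁻¹(x) ≤ m⁻¹(d)` iff `x ≤ ∀_m(m⁻¹(d))`. A left adjoint
preserves joins, and for `m ∧ -` this is the distributive law `m ∧ (n ∨ k) = (m ∧ n) ∨ (m ∧ k)`.
-/

namespace Dagger

section Subobjects

variable {C : Type u} [Category.{v} C]

lemma subLE_refl {M X : C} (m : M ⟶ X) : SubLE m m :=
  ⟨𝟙 M, Category.id_comp m⟩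

lemma subLE_trans {A B D X : C} {a : A ⟶ X} {b : B ⟶ X} {d : D ⟶ X}
    (hab : SubLE a b) (hbd : SubLE b d) : SubLE a d := by
  obtain ⟨φ, rfl⟩ := hab
  obtain ⟨ψ, rfl⟩ := hbd
  exact ⟨φ ≫ ψ, Category.assoc φ ψ d⟩

lemma SubLE.comp_right {P S M X : C} {p : P ⟶ M} {s : S ⟶ M} (h : SubLE p s) (m : M ⟶ X) :
    SubLE (p ≫ m) (s ≫ m) := by
  obtain ⟨φ, rfl⟩ := h
  exact ⟨φ, (Category.assoc φ s m).symm⟩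

lemma SubLE.comp_eq_zero [HasZeroMorphisms C] {M N X Y : C} {m : M ⟶ X} {n : N ⟶ X} {f : X ⟶ Y}
    (h : SubLE m n) (hn : n ≫ f = 0) : m ≫ f = 0 := by
  obtain ⟨φ, rfl⟩ := h
  rw [Category.assoc, hn, comp_zero]

lemma IsKer.subLE [HasZeroMorphisms C] {K X Y Z : C} {f : X ⟶ Y} {k : K ⟶ X} (hk : IsKer f k)
    {g : Z ⟶ X} (hg : g ≫ f = 0) : SubLE g k := by
  obtain ⟨φ, hφ, -⟩ := hk.lift g hg
  exact ⟨φ, hφ⟩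

end Subobjects

section Dagger

variable {C : Type u} [Category.{v} C] [HasZeroMorphisms C] [Dagger C]

lemma dag_comp_dag_eq_zero {X Y Z : C} {f : X ⟶ Y} {g : Y ⟶ Z} (h : f ≫ g = 0) :
    dag g ≫ dag f = 0 := by
  rw [← dag_comp, h, dag_zero]

lemma comp_dag_eq_zero_swap {X Y Z : C} {f : X ⟶ Y} {g : Z ⟶ Y} (h : f ≫ dag g = 0) :
    g ≫ dag f = 0 := by
  simpa only [dag_dag] using dag_comp_dag_eq_zero h

lemma DaggerMono.comp {P M X : C} {p : P ⟶ M} {m : M ⟶ X} (hp : DaggerMono p)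
    (hm : DaggerMono m) : DaggerMono (p ≫ m) := by
  unfold DaggerMono at *
  rw [dag_comp, Category.assoc, ← Category.assoc m, hm, Category.id_comp, hp]

lemma DaggerMono.cancel {M X Z : C} {x : M ⟶ X} (hx : DaggerMono x) {a b : Z ⟶ M}
    (hab : a ≫ x = b ≫ x) : a = b := by
  simpa only [Category.assoc, show x ≫ dag x = 𝟙 M from hx, Category.comp_id] using
    congrArg (· ≫ dag x) hab

lemma isDagKer_of_daggerMono {M X Y : C} {x : M ⟶ X} {f : X ⟶ Y} (hx : DaggerMono x)
    (hxf : x ≫ f = 0) (hfac : ∀ {Z : C} (g : Z ⟶ X), g ≫ f = 0 → SubLE g x) :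
    IsDagKer f x := by
  refine ⟨⟨hxf, fun g hg => ?_⟩, hx⟩
  obtain ⟨φ, hφ⟩ := hfac g hg
  exact ⟨φ, hφ, fun ψ hψ => hx.cancel (hψ.trans hφ.symm)⟩

lemma IsOrthoOf.comp_dag_eq_zero {M P X : C} {m : M ⟶ X} {p : P ⟶ X}
    (h : IsOrthoOf m p) : p ≫ dag m = 0 :=
  h.1.comp_zero

lemma IsOrthoOf.comp_dag_eq_zero' {M P X : C} {m : M ⟶ X} {p : P ⟶ X}
    (h : IsOrthoOf m p) : m ≫ dag p = 0 :=
  comp_dag_eq_zero_swap h.comp_dag_eq_zero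

lemma IsOrthoOf.antitone {M N MP NP X : C} {x : M ⟶ X} {y : N ⟶ X}
    {xp : MP ⟶ X} {yp : NP ⟶ X} (hxy : SubLE x y)
    (hx : IsOrthoOf x xp) (hy : IsOrthoOf y yp) : SubLE yp xp := by
  obtain ⟨φ, rfl⟩ := hxy
  apply hx.1.subLE
  rw [dag_comp, ← Category.assoc, hy.comp_dag_eq_zero, zero_comp]

lemma SubLE.comp_dag_eq_zero {M N X Z : C} {y : M ⟶ X} {z : N ⟶ X} {g : Z ⟶ X}
    (hyz : SubLE y z) (hg : g ≫ dag z = 0) : g ≫ dag y = 0 :=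
  comp_dag_eq_zero_swap (hyz.comp_eq_zero (comp_dag_eq_zero_swap hg))

lemma KernelMap.daggerMono {M X : C} {x : M ⟶ X} (hx : KernelMap x) : DaggerMono x := by
  obtain ⟨_, _, hf⟩ := hx
  exact hf.2

lemma KernelMap.isDagKer_dag_ortho {M P X : C} {x : M ⟶ X} {xp : P ⟶ X}
    (hx : KernelMap x) (hxp : IsOrthoOf x xp) : IsDagKer (dag xp) x := by
  obtain ⟨Y, f, hf⟩ := hx
  obtain ⟨u, hu⟩ := hxp.1.subLE (dag_comp_dag_eq_zero hf.1.comp_zero)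
  have hf_eq : f = dag xp ≫ dag u := by rw [← dag_comp, hu, dag_dag]
  refine isDagKer_of_daggerMono hf.2 hxp.comp_dag_eq_zero' fun g hg => hf.1.subLE ?_
  rw [hf_eq, ← Category.assoc, hg, zero_comp]

lemma KernelMap.subLE_of_comp_dag_eq_zero {M P X Z : C} {x : M ⟶ X} {xp : P ⟶ X}
    (hx : KernelMap x) (hxp : IsOrthoOf x xp) {g : Z ⟶ X} (hg : g ≫ dag xp = 0) :
    SubLE g x :=
  (hx.isDagKer_dag_ortho hxp).1.subLE hg

lemma IsInvImg.kernelMap {N P X Y : C} {f : X ⟶ Y} {n : N ⟶ Y} {p : P ⟶ X}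
    (h : IsInvImg f n p) : KernelMap p := by
  obtain ⟨_, _, _, hp⟩ := h
  exact ⟨_, _, hp⟩

lemma IsInvImg.comp_subLE {N P X Y : C} {f : X ⟶ Y} {n : N ⟶ Y} {p : P ⟶ X}
    (h : IsInvImg f n p) (hn : KernelMap n) : SubLE (p ≫ f) n := by
  obtain ⟨_, np, hnp, hp⟩ := h
  exact hn.subLE_of_comp_dag_eq_zero hnp (by rw [Category.assoc]; exact hp.1.comp_zero)

lemma IsInvImg.subLE_of_comp_subLE {N P Q X Y : C} {f : X ⟶ Y} {n : N ⟶ Y} {p : P ⟶ X}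
    (h : IsInvImg f n p) {φ : Q ⟶ X} (hφ : SubLE (φ ≫ f) n) : SubLE φ p := by
  obtain ⟨_, np, hnp, hp⟩ := h
  apply hp.1.subLE
  rw [← Category.assoc]
  exact hφ.comp_eq_zero hnp.comp_dag_eq_zero'

lemma IsJoin.left_subLE {N K J X : C} {n : N ⟶ X} {k : K ⟶ X} {j : J ⟶ X}
    (hj : IsJoin n k j) : SubLE n j := by
  obtain ⟨_, _, _, _, _, _, hn, -, hw, hwj⟩ := hj
  exact hwj.1.subLE (hw.2.1.comp_dag_eq_zero hn.comp_dag_eq_zero')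

lemma IsJoin.right_subLE {N K J X : C} {n : N ⟶ X} {k : K ⟶ X} {j : J ⟶ X}
    (hj : IsJoin n k j) : SubLE k j := by
  obtain ⟨_, _, _, _, _, _, -, hk, hw, hwj⟩ := hj
  exact hwj.1.subLE (hw.2.2.1.comp_dag_eq_zero hk.comp_dag_eq_zero')

lemma IsJoin.kernelMap {N K J X : C} {n : N ⟶ X} {k : K ⟶ X} {j : J ⟶ X}
    (hj : IsJoin n k j) : KernelMap j := by
  obtain ⟨_, _, W, _, _, w, -, -, -, hwj⟩ := hj
  exact ⟨W, dag w, hwj⟩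

end Dagger

section DagKerCat

variable {C : Type u} [Category.{v} C] [HasZeroMorphisms C] [HasZeroObject C] [DagKerCat C]

lemma exists_isOrthoOf {M X : C} (m : M ⟶ X) : ∃ (P : C) (p : P ⟶ X), IsOrthoOf m p :=
  DagKerCat.hasKer (dag m)

lemma exists_isInvImg {N X Y : C} (f : X ⟶ Y) (n : N ⟶ Y) :
    ∃ (P : C) (p : P ⟶ X), IsInvImg f n p := by
  obtain ⟨NP, np, hnp⟩ := exists_isOrthoOf n
  obtain ⟨P, p, hp⟩ := DagKerCat.hasKer (f ≫ dag np)
  exact ⟨P, p, NP, np, hnp, hp⟩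

lemma IsJoin.subLE {N K J Z X : C} {n : N ⟶ X} {k : K ⟶ X} {j : J ⟶ X} {z : Z ⟶ X}
    (hj : IsJoin n k j) (hz : KernelMap z) (hnz : SubLE n z) (hkz : SubLE k z) :
    SubLE j z := by
  obtain ⟨_, _, _, _, _, w, hn, hk, hw, hwj⟩ := hj
  obtain ⟨_, zp, hzp⟩ := exists_isOrthoOf z
  have hzw : SubLE zp w :=
    hw.2.2.2 zp ⟨_, _, hzp⟩ (hn.antitone hnz hzp) (hk.antitone hkz hzp)
  exact hz.subLE_of_comp_dag_eq_zero hzp (hzw.comp_dag_eq_zero hwj.1.comp_zero)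

-- `p ≫ m` is the kernel of the dagger of its orthocomplement `z`: a map killing `z†`
-- kills `m^⊥†` (as `m^⊥ ≤ z`), so factors through `m`, and then kills `p^⊥†` (as `p^⊥ ≫ m ≤ z`).
lemma KernelMap.comp {P M X : C} {p : P ⟶ M} {m : M ⟶ X}
    (hp : KernelMap p) (hm : KernelMap m) : KernelMap (p ≫ m) := by
  obtain ⟨Z, z, hz⟩ := exists_isOrthoOf (p ≫ m)
  obtain ⟨_, mp, hmp⟩ := exists_isOrthoOf m
  obtain ⟨_, pp, hpp⟩ := exists_isOrthoOf p
  have hmp_z : SubLE mp z := hz.antitone ⟨p, rfl⟩ hmp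
  have hpp_z : SubLE (pp ≫ m) z := by
    apply hz.1.subLE
    rw [dag_comp, Category.assoc, ← Category.assoc m, hm.daggerMono,
      Category.id_comp, hpp.comp_dag_eq_zero]
  refine ⟨Z, dag z, isDagKer_of_daggerMono (hp.daggerMono.comp hm.daggerMono)
    hz.comp_dag_eq_zero' fun g hg => ?_⟩
  obtain ⟨g', rfl⟩ := hm.subLE_of_comp_dag_eq_zero hmp (hmp_z.comp_dag_eq_zero hg)
  have hg' : g' ≫ dag pp = 0 := by
    have := hpp_z.comp_dag_eq_zero hg
    rwa [dag_comp, Category.assoc, ← Category.assoc m, hm.daggerMono,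
      Category.id_comp] at this
  obtain ⟨g'', rfl⟩ := hp.subLE_of_comp_dag_eq_zero hpp hg'
  exact ⟨g'', (Category.assoc _ _ _).symm⟩

-- `e` represents `∀_f(s)`, characterised by the adjunction `f⁻¹ ⊣ ∀_f`.
def IsForallImg {S E X Y : C} (f : X ⟶ Y) (s : S ⟶ X) (e : E ⟶ Y) : Prop :=
  ∀ {L P : C} (l : L ⟶ Y) (p : P ⟶ X), KernelMap l → IsInvImg f l p → (SubLE p s ↔ SubLE l e)

-- With `s = m⁻¹(d)`, `e = ∀_m(s)` is the implication `m ⇒ d`: the largest `x` with `m ∧ x ≤ d`.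
lemma IsForallImg.subLE_of_meet_subLE {M S E D X Z W : C} {m : M ⟶ X} {s : S ⟶ M}
    {e : E ⟶ X} {d : D ⟶ X} {x : Z ⟶ X} {w : W ⟶ X} (he : IsForallImg m s e)
    (hs : IsInvImg m d s) (hm : KernelMap m) (hx : KernelMap x) (hw : IsMeet m x w)
    (hwd : SubLE w d) : SubLE x e := by
  obtain ⟨_, p, hp⟩ := exists_isInvImg m x
  refine (he x p hx hp).1 (hs.subLE_of_comp_subLE (subLE_trans ?_ hwd))
  exact hw.2.2.2 _ (hp.kernelMap.comp hm) ⟨p, rfl⟩ (hp.comp_subLE hx)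

lemma IsForallImg.subLE_of_subLE_of_subLE {M S E D X A : C} {m : M ⟶ X} {s : S ⟶ M}
    {e : E ⟶ X} {d : D ⟶ X} {a : A ⟶ X} (he : IsForallImg m s e)
    (hs : IsInvImg m d s) (hd : KernelMap d) (ha : KernelMap a) (ham : SubLE a m)
    (hae : SubLE a e) : SubLE a d := by
  obtain ⟨_, p, hp⟩ := exists_isInvImg m a
  obtain ⟨φ, rfl⟩ := ham
  have hφp : SubLE φ p := hp.subLE_of_comp_subLE (subLE_refl _)
  have hps : SubLE p s := (he _ p ha hp).2 hae
  exact subLE_trans ((subLE_trans hφp hps).comp_right m) (hs.comp_subLE hd)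

lemma IsJoin.subLE_meet_join {X M N K J A B D E : C} {m : M ⟶ X} {n : N ⟶ X} {k : K ⟶ X}
    {j : J ⟶ X} {a : A ⟶ X} {b : B ⟶ X} {c : D ⟶ X} {d : E ⟶ X}
    (hj : IsJoin n k j) (ha : IsMeet m j a) (hb : IsMeet m n b) (hc : IsMeet m k c)
    (hd : IsJoin b c d) : SubLE d a :=
  hd.subLE ha.1
    (ha.2.2.2 b hb.1 hb.2.1 (subLE_trans hb.2.2.1 hj.left_subLE))
    (ha.2.2.2 c hc.1 hc.2.1 (subLE_trans hc.2.2.1 hj.right_subLE))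

end DagKerCat

end Dagger

open Dagger in
/-- if every pullback functor `f⁻¹ : KSub(Y) → KSub(X)` has a
right adjoint `∀_f`, then every `KSub(X)` is a Boolean algebra, i.e. it is
distributive: `m ∧ (n ∨ k) = (m ∧ n) ∨ (m ∧ k)`. -/
theorem stmt14 {C : Type u} [Category.{v} C] [HasZeroMorphisms C] [HasZeroObject C]
    [DagKerCat C]
    (h : ∀ {X Y M : C} (f : X ⟶ Y) (m : M ⟶ X), KernelMap m →
      ∃ (N : C) (n : N ⟶ Y), KernelMap n ∧
        ∀ {L P : C} (l : L ⟶ Y) (p : P ⟶ X), KernelMap l → IsInvImg f l p →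
          (SubLE p m ↔ SubLE l n)) :
    ∀ {X M N K J A B D E : C} (m : M ⟶ X) (n : N ⟶ X) (k : K ⟶ X),
      KernelMap m → KernelMap n → KernelMap k →
      ∀ (j : J ⟶ X) (a : A ⟶ X) (b : B ⟶ X) (c : D ⟶ X) (d : E ⟶ X),
        IsJoin n k j → IsMeet m j a → IsMeet m n b → IsMeet m k c →
        IsJoin b c d → SubEq a d := by
  intro X M N K J A B D E m n k hm hn hk j a b c d hj ha hb hc hd
  refine ⟨?_, hj.subLE_meet_join ha hb hc hd⟩
  obtain ⟨_, s, hs⟩ := exists_isInvImg m d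
  obtain ⟨_, e, he_ker, he⟩ := h m s hs.kernelMap
  replace he : IsForallImg m s e := he
  have hje : SubLE j e := hj.subLE he_ker
    (he.subLE_of_meet_subLE hs hm hn hb hd.left_subLE)
    (he.subLE_of_meet_subLE hs hm hk hc hd.right_subLE)
  exact he.subLE_of_subLE_of_subLE hs hd.kernelMap ha.1 ha.2.1 (subLE_trans ha.2.2.1 hje)
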